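/- arXiv:1408.3919 — 7 statements merged into one kernel-verified Lean document; each statement's English description precedes it below -/
import Mathlib

section
/- Let 𝕋 be ℝ, [0,∞) or (0,∞), and let (X_t)_{t∈𝕋} be a real-valued stochastic process whose finite-dimensional distributions are infinitely divisible, with characteristic exponents ψ_{t_1,…,t_k}. If (X_t)_{t∈𝕋} is (α,δ)-dilatively stable for some α ∈ ℝ and δ ∈ ℝ with δ ≠ 0, then (X_t)_{t∈𝕋} is (1/2 − α/δ, −1/δ)-aggregate similar; that is, for every m ∈ ℕ, k ∈ ℕ and t_1,…,t_k ∈ 𝕋, the m-fold convolution power of the law of the random vector (X_{t_1},…,X_{t_k}) equals the law of (m^{1/2−α/δ} X_{m^{1/δ} t_1},…, m^{1/2−α/δ} X_{m^{1/δ} t_k}). -/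
/-!
By Lévy's uniqueness theorem it suffices to compare characteristic functions. The `m`-fold
convolution power of the law of `(X_{t_1}, …, X_{t_k})` has characteristic function
`exp (-m ψ_t(θ))`. Dilative stability at scale `c = m^{1/δ}` gives
`ψ_{ct}(m^{1/2 - α/δ} θ) = c^δ ψ_t(c^{α - δ/2} m^{1/2 - α/δ} θ) = m ψ_t(θ)`, which is the
characteristic exponent of the rescaled vector `m^{1/2 - α/δ} (X_{c t_1}, …, X_{c t_k})`.
-/

open MeasureTheory ProbabilityTheory Filter Topology

/-- Convolution of two measures on an additive measurable space. -/
noncomputable def mconv {E : Type*} [MeasurableSpace E] [Add E]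
    (μ ν : Measure E) : Measure E :=
  Measure.map (fun p : E × E => p.1 + p.2) (μ.prod ν)

/-- The `n`-fold convolution power of a measure. -/
noncomputable def convPow {E : Type*} [MeasurableSpace E] [Add E] [Zero E]
    (ν : Measure E) : ℕ → Measure E
  | 0 => Measure.dirac 0
  | n + 1 => mconv (convPow ν n) ν

open Complex

theorem mconv_eq_conv {E : Type*} [MeasurableSpace E] [AddMonoid E] (μ ν : Measure E) :
    mconv μ ν = μ ∗ ν := rfl

instance isFiniteMeasure_convPow {E : Type*} [MeasurableSpace E] [AddMonoid E]
    (μ : Measure E) [IsFiniteMeasure μ] (n : ℕ) : IsFiniteMeasure (convPow μ n) := by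
  induction n with
  | zero => exact inferInstanceAs (IsFiniteMeasure (Measure.dirac 0))
  | succ n ih => exact inferInstanceAs (IsFiniteMeasure (Measure.map _ _))

theorem charFunDual_convPow {E : Type*} [NormedAddCommGroup E] [NormedSpace ℝ E]
    [MeasurableSpace E] [BorelSpace E] [SecondCountableTopology E]
    (μ : Measure E) [IsFiniteMeasure μ] (n : ℕ) (L : StrongDual ℝ E) :
    charFunDual (convPow μ n) L = charFunDual μ L ^ n := by
  induction n with
  | zero => simp [convPow]
  | succ n ih => rw [convPow, mconv_eq_conv, charFunDual_conv, ih, pow_succ]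

theorem ContinuousLinearMap.apply_pi_eq_sum {ι : Type*} [Fintype ι] [DecidableEq ι]
    (L : StrongDual ℝ (ι → ℝ)) (x : ι → ℝ) : L x = ∑ j, L (Pi.single j 1) * x j := by
  rw [← L.sum_comp_single]
  refine Finset.sum_congr rfl fun j _ => ?_
  rw [L.comp_apply, ContinuousLinearMap.single_apply, mul_comm, ← smul_eq_mul, ← map_smul,
    ← Pi.single_smul, smul_eq_mul, mul_one]

theorem charFunDual_map_pi {Ω ι : Type*} [MeasurableSpace Ω] [Fintype ι] [DecidableEq ι]
    {P : Measure Ω} {Y : Ω → ι → ℝ} (hY : AEMeasurable Y P) (L : StrongDual ℝ (ι → ℝ)) :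
    charFunDual (P.map Y) L
      = ∫ ω, cexp (I * ∑ j, (L (Pi.single j 1) : ℂ) * (Y ω j : ℂ)) ∂P := by
  rw [charFunDual_apply, integral_map hY (by fun_prop)]
  congr 1 with ω
  rw [L.apply_pi_eq_sum, mul_comm]
  push_cast
  rfl

theorem mul_mem_of_pos {T : Set ℝ} (hT : T = Set.univ ∨ T = Set.Ici 0 ∨ T = Set.Ioi 0)
    {c t : ℝ} (hc : 0 < c) (ht : t ∈ T) : c * t ∈ T := by
  rcases hT with rfl | rfl | rfl
  · trivial
  · exact mul_nonneg hc.le ht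
  · exact mul_pos hc ht

def IsDilativelyStable (T : Set ℝ) (ψ : ∀ k : ℕ, (Fin k → ℝ) → (Fin k → ℝ) → ℂ) (α δ : ℝ) :
    Prop :=
  ∀ c : ℝ, 0 < c → ∀ (k : ℕ) (t : Fin k → ℝ), (∀ i, t i ∈ T) → ∀ θ : Fin k → ℝ,
    ψ k (fun i => c * t i) θ = ((c ^ δ : ℝ) : ℂ) * ψ k t (fun i => c ^ (α - δ / 2) * θ i)

theorem IsDilativelyStable.apply_rpow_one_div {T : Set ℝ}
    {ψ : ∀ k : ℕ, (Fin k → ℝ) → (Fin k → ℝ) → ℂ} {α δ : ℝ} (h : IsDilativelyStable T ψ α δ)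
    (hδ : δ ≠ 0) {x : ℝ} (hx : 0 < x) {k : ℕ} {t : Fin k → ℝ} (ht : ∀ i, t i ∈ T)
    (θ : Fin k → ℝ) :
    ψ k (fun i => x ^ (1 / δ) * t i) (fun i => x ^ ((1 : ℝ) / 2 - α / δ) * θ i)
      = x * ψ k t θ := by
  have hscale : (x ^ (1 / δ)) ^ (α - δ / 2) * x ^ ((1 : ℝ) / 2 - α / δ) = 1 := by
    rw [← Real.rpow_mul hx.le, ← Real.rpow_add hx]
    convert Real.rpow_zero x
    field_simp
    ring
  rw [h _ (by positivity) k t ht, one_div, Real.rpow_inv_rpow hx.le hδ]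
  simp_rw [← mul_assoc, ← one_div, hscale, one_mul]

theorem dilatively_stable_implies_aggregate_similar_general
    {Ω : Type*} [MeasurableSpace Ω] (P : Measure Ω) [IsProbabilityMeasure P]
    (T : Set ℝ) (hT : T = Set.univ ∨ T = Set.Ici 0 ∨ T = Set.Ioi 0)
    (X : ℝ → Ω → ℝ) (hX : ∀ t ∈ T, Measurable (X t))
    (ψ : ∀ k : ℕ, (Fin k → ℝ) → (Fin k → ℝ) → ℂ)
    (hψchar : ∀ (k : ℕ) (t : Fin k → ℝ), (∀ i, t i ∈ T) → ∀ θ : Fin k → ℝ,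
      ∫ ω, Complex.exp (Complex.I * ∑ j, (θ j : ℂ) * (X (t j) ω : ℂ)) ∂P
        = Complex.exp (-ψ k t θ))
    (α δ : ℝ) (hδ : δ ≠ 0)
    (hDS : ∀ c : ℝ, 0 < c → ∀ (k : ℕ) (t : Fin k → ℝ), (∀ i, t i ∈ T) →
      ∀ θ : Fin k → ℝ,
        ψ k (fun i => c * t i) θ
          = ((c ^ δ : ℝ) : ℂ) * ψ k t (fun i => c ^ (α - δ / 2) * θ i)) :
    ∀ m : ℕ, 0 < m → ∀ (k : ℕ) (t : Fin k → ℝ), (∀ i, t i ∈ T) →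
      convPow (Measure.map (fun ω i => X (t i) ω) P) m
        = Measure.map
            (fun ω i => (m : ℝ) ^ ((1 : ℝ) / 2 - α / δ)
              * X ((m : ℝ) ^ (1 / δ) * t i) ω) P := by
  intro m hm k t ht
  have hm_pos : (0 : ℝ) < m := by exact_mod_cast hm
  have hmt : ∀ i, (m : ℝ) ^ (1 / δ) * t i ∈ T := fun i => mul_mem_of_pos hT (by positivity) (ht i)
  refine Measure.ext_of_charFunDual (funext fun L => ?_)
  set θ : Fin k → ℝ := fun j => L (Pi.single j 1)
  have hchar := hψchar k _ hmt (fun j => (m : ℝ) ^ ((1 : ℝ) / 2 - α / δ) * θ j)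
  rw [IsDilativelyStable.apply_rpow_one_div hDS hδ hm_pos ht, ofReal_natCast, ← mul_neg] at hchar
  rw [charFunDual_convPow,
    charFunDual_map_pi (measurable_pi_lambda _ fun i => hX _ (ht i)).aemeasurable,
    charFunDual_map_pi (measurable_pi_lambda _ fun i => (hX _ (hmt i)).const_mul _).aemeasurable,
    hψchar k t ht, ← Complex.exp_nat_mul]
  refine hchar.symm.trans ?_
  congr 1 with ω
  congr 2
  refine Finset.sum_congr rfl fun j _ => ?_
  push_cast
  ring

/-- If an infinitely divisible process `X` indexed by `𝕋 ∈ {ℝ, [0,∞), (0,∞)}`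
is `(α,δ)`-dilatively stable with `δ ≠ 0`, then it is
`(1/2 − α/δ, −1/δ)`-aggregate similar. -/
theorem dilatively_stable_implies_aggregate_similar
    {Ω : Type*} [MeasurableSpace Ω] (P : Measure Ω) [IsProbabilityMeasure P]
    (T : Set ℝ) (hT : T = Set.univ ∨ T = Set.Ici 0 ∨ T = Set.Ioi 0)
    (X : ℝ → Ω → ℝ) (hX : ∀ t ∈ T, Measurable (X t))
    (ψ : ∀ k : ℕ, (Fin k → ℝ) → (Fin k → ℝ) → ℂ)
    (hψ0 : ∀ (k : ℕ) (t : Fin k → ℝ), (∀ i, t i ∈ T) → ψ k t 0 = 0)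
    (hψcont : ∀ (k : ℕ) (t : Fin k → ℝ), (∀ i, t i ∈ T) → Continuous (ψ k t))
    (hψchar : ∀ (k : ℕ) (t : Fin k → ℝ), (∀ i, t i ∈ T) → ∀ θ : Fin k → ℝ,
      ∫ ω, Complex.exp (Complex.I * ∑ j, (θ j : ℂ) * (X (t j) ω : ℂ)) ∂P
        = Complex.exp (-ψ k t θ))
    (hID : ∀ (k : ℕ) (t : Fin k → ℝ), (∀ i, t i ∈ T) → ∀ n : ℕ, 0 < n →
      ∃ ρ : Measure (Fin k → ℝ), IsProbabilityMeasure ρ ∧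
        convPow ρ n = Measure.map (fun ω i => X (t i) ω) P)
    (α δ : ℝ) (hδ : δ ≠ 0)
    (hDS : ∀ c : ℝ, 0 < c → ∀ (k : ℕ) (t : Fin k → ℝ), (∀ i, t i ∈ T) →
      ∀ θ : Fin k → ℝ,
        ψ k (fun i => c * t i) θ
          = ((c ^ δ : ℝ) : ℂ) * ψ k t (fun i => c ^ (α - δ / 2) * θ i)) :
    ∀ m : ℕ, 0 < m → ∀ (k : ℕ) (t : Fin k → ℝ), (∀ i, t i ∈ T) →
      convPow (Measure.map (fun ω i => X (t i) ω) P) m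
        = Measure.map
            (fun ω i => (m : ℝ) ^ ((1 : ℝ) / 2 - α / δ)
              * X ((m : ℝ) ^ (1 / δ) * t i) ω) P :=
  dilatively_stable_implies_aggregate_similar_general P T hT X hX ψ hψchar α δ hδ hDS
end

section
/- Let 𝕋 be ℝ, [0,∞) or (0,∞), and let (X_t)_{t∈𝕋} be a real-valued stochastic process whose finite-dimensional distributions are infinitely divisible, with characteristic exponents ψ_{t_1,…,t_k}. Suppose X is (f,g)-dilatively stable for continuous functions f, g : (0,∞) → (0,∞). If X is not the identically zero process (i.e., ψ_{t}(θ) ≠ 0 for some t ∈ 𝕋 and θ ∈ ℝ) and f(T) = T^β for some β ∈ ℝ and all T > 0, then there exists a unique γ ∈ ℝ such that g(T) = T^γ for all T > 0. -/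
open MeasureTheory ProbabilityTheory Filter Topology

/-! Applying dilative stability at `c * d` and successively at `d` and `c` to the one-dimensional
exponent at a point where it does not vanish shows that `g` is multiplicative once `f` is.
A continuous positive multiplicative function on `(0, ∞)` is a power function, since
`x ↦ log (g (exp x))` is a continuous additive map `ℝ → ℝ`, hence linear. -/

open Real Set

lemma mul_mem_of_eq_univ_or_Ici_or_Ioi {T : Set ℝ}
    (hT : T = univ ∨ T = Ici 0 ∨ T = Ioi 0) {s c : ℝ} (hs : s ∈ T) (hc : 0 < c) : c * s ∈ T := by
  rcases hT with rfl | rfl | rfl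
  · trivial
  · exact mul_nonneg hc.le hs
  · exact mul_pos hc hs

lemma map_mul_of_dilativelyStable {T : Set ℝ} (hT : ∀ s ∈ T, ∀ c : ℝ, 0 < c → c * s ∈ T)
    {φ : ℝ → ℝ → ℂ} {f g : ℝ → ℝ} (hf0 : ∀ c : ℝ, 0 < c → f c ≠ 0)
    (hf : ∀ c d : ℝ, 0 < c → 0 < d → f (c * d) = f c * f d)
    (hDS : ∀ c : ℝ, 0 < c → ∀ t ∈ T, ∀ θ : ℝ, φ (c * t) θ = g c * φ t (f c * θ))
    (hnz : ∃ t ∈ T, ∃ θ : ℝ, φ t θ ≠ 0) {c d : ℝ} (hc : 0 < c) (hd : 0 < d) :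
    g (c * d) = g c * g d := by
  obtain ⟨t, ht, θ, hθ⟩ := hnz
  have hcd : 0 < c * d := mul_pos hc hd
  have hθ' : f (c * d) * (θ / f (c * d)) = θ := mul_div_cancel₀ θ (hf0 _ hcd)
  have h_cd := hDS (c * d) hcd t ht (θ / f (c * d))
  have h_c_d : φ (c * (d * t)) (θ / f (c * d)) = g c * g d * φ t θ := by
    rw [hDS c hc _ (hT t ht d hd), hDS d hd t ht, ← mul_assoc (f d), mul_comm (f d), ← hf c d hc hd,
      hθ', mul_assoc]
  rw [hθ', mul_assoc c d t, h_c_d] at h_cd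
  exact_mod_cast (mul_right_cancel₀ hθ h_cd).symm

lemma exists_eq_rpow_of_map_mul {g : ℝ → ℝ} (hpos : ∀ c : ℝ, 0 < c → 0 < g c)
    (hcont : ContinuousOn g (Ioi 0)) (hmul : ∀ c d : ℝ, 0 < c → 0 < d → g (c * d) = g c * g d) :
    ∃ γ : ℝ, ∀ c : ℝ, 0 < c → g c = c ^ γ := by
  let L : ℝ →+ ℝ := AddMonoidHom.mk' (fun x => log (g (exp x))) fun x y => by
    simp only [exp_add, hmul _ _ (exp_pos x) (exp_pos y),
      log_mul (hpos _ (exp_pos x)).ne' (hpos _ (exp_pos y)).ne']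
  have hL : Continuous L := continuous_iff_continuousAt.2 fun x =>
    ((hcont.continuousAt (Ioi_mem_nhds (exp_pos x))).comp' continuous_exp.continuousAt).log
      (hpos _ (exp_pos x)).ne'
  refine ⟨L 1, fun c hc => ?_⟩
  calc g c = exp (L (log c • 1)) := by simp [L, exp_log hc, exp_log (hpos c hc)]
    _ = c ^ L 1 := by rw [map_real_smul L hL, smul_eq_mul, rpow_def_of_pos hc]

theorem g_is_power_function_of_f_power_general
    (T : Set ℝ) (hT : T = Set.univ ∨ T = Set.Ici 0 ∨ T = Set.Ioi 0)
    (ψ : ∀ k : ℕ, (Fin k → ℝ) → (Fin k → ℝ) → ℂ)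
    (f g : ℝ → ℝ)
    (hfpos : ∀ c : ℝ, 0 < c → 0 < f c) (hgpos : ∀ c : ℝ, 0 < c → 0 < g c)
    (hgcont : ContinuousOn g (Set.Ioi 0))
    -- (f,g)-dilative stability
    (hDS : ∀ c : ℝ, 0 < c → ∀ (k : ℕ) (t : Fin k → ℝ), (∀ i, t i ∈ T) →
      ∀ θ : Fin k → ℝ,
        ψ k (fun i => c * t i) θ = ((g c : ℝ) : ℂ) * ψ k t (fun i => f c * θ i))
    -- `X` is not the identically zero process
    (hnz : ∃ t ∈ T, ∃ θ : ℝ, ψ 1 (fun _ => t) (fun _ => θ) ≠ 0)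
    (β : ℝ) (hfβ : ∀ c : ℝ, 0 < c → f c = c ^ β) :
    ∃! γ : ℝ, ∀ c : ℝ, 0 < c → g c = c ^ γ := by
  have hg : ∀ c d : ℝ, 0 < c → 0 < d → g (c * d) = g c * g d := fun c d hc hd =>
    map_mul_of_dilativelyStable (fun s hs c hc => mul_mem_of_eq_univ_or_Ici_or_Ioi hT hs hc)
      (φ := fun t θ => ψ 1 (fun _ => t) (fun _ => θ)) (fun c hc => (hfpos c hc).ne')
      (fun c d hc hd => by rw [hfβ c hc, hfβ d hd, hfβ _ (mul_pos hc hd), mul_rpow hc.le hd.le])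
      (fun c hc t ht θ => hDS c hc 1 (fun _ => t) (fun _ => ht) (fun _ => θ)) hnz hc hd
  obtain ⟨γ, hγ⟩ := exists_eq_rpow_of_map_mul hgpos hgcont hg
  refine ⟨γ, hγ, fun γ' hγ' => exp_injective ?_⟩
  have h_e := hγ' _ (exp_pos 1)
  rw [hγ _ (exp_pos 1), exp_one_rpow, exp_one_rpow] at h_e
  exact h_e.symm

/-- If an infinitely divisible process is `(f,g)`-dilatively stable,
not identically zero, and `f(T) = T^β`, then `g` is a uniquely determined power function. -/
theorem g_is_power_function_of_f_power
    {Ω : Type*} [MeasurableSpace Ω] (P : Measure Ω) [IsProbabilityMeasure P]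
    (T : Set ℝ) (hT : T = Set.univ ∨ T = Set.Ici 0 ∨ T = Set.Ioi 0)
    (X : ℝ → Ω → ℝ) (hX : ∀ t ∈ T, Measurable (X t))
    (ψ : ∀ k : ℕ, (Fin k → ℝ) → (Fin k → ℝ) → ℂ)
    (hψ0 : ∀ (k : ℕ) (t : Fin k → ℝ), (∀ i, t i ∈ T) → ψ k t 0 = 0)
    (hψcont : ∀ (k : ℕ) (t : Fin k → ℝ), (∀ i, t i ∈ T) → Continuous (ψ k t))
    (hψchar : ∀ (k : ℕ) (t : Fin k → ℝ), (∀ i, t i ∈ T) → ∀ θ : Fin k → ℝ,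
      ∫ ω, Complex.exp (Complex.I * ∑ j, (θ j : ℂ) * (X (t j) ω : ℂ)) ∂P
        = Complex.exp (-ψ k t θ))
    (hID : ∀ (k : ℕ) (t : Fin k → ℝ), (∀ i, t i ∈ T) → ∀ n : ℕ, 0 < n →
      ∃ ρ : Measure (Fin k → ℝ), IsProbabilityMeasure ρ ∧
        convPow ρ n = Measure.map (fun ω i => X (t i) ω) P)
    (f g : ℝ → ℝ)
    (hfpos : ∀ c : ℝ, 0 < c → 0 < f c) (hgpos : ∀ c : ℝ, 0 < c → 0 < g c)
    (hfcont : ContinuousOn f (Set.Ioi 0)) (hgcont : ContinuousOn g (Set.Ioi 0))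
    -- (f,g)-dilative stability
    (hDS : ∀ c : ℝ, 0 < c → ∀ (k : ℕ) (t : Fin k → ℝ), (∀ i, t i ∈ T) →
      ∀ θ : Fin k → ℝ,
        ψ k (fun i => c * t i) θ = ((g c : ℝ) : ℂ) * ψ k t (fun i => f c * θ i))
    -- `X` is not the identically zero process
    (hnz : ∃ t ∈ T, ∃ θ : ℝ, ψ 1 (fun _ => t) (fun _ => θ) ≠ 0)
    (β : ℝ) (hfβ : ∀ c : ℝ, 0 < c → f c = c ^ β) :
    ∃! γ : ℝ, ∀ c : ℝ, 0 < c → g c = c ^ γ :=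
  g_is_power_function_of_f_power_general T hT ψ f g hfpos hgpos hgcont hDS hnz β hfβ
end

section
/- Let (X_t)_{t∈(0,∞)} be a real-valued stochastic process whose finite-dimensional distributions are infinitely divisible, with characteristic exponents ψ_{t_1,…,t_k}, and suppose X is (f,g)-dilatively stable for continuous functions f, g : (0,∞) → (0,∞). Suppose that E(X_1²) < ∞, Var(X_1) > 0, and the law of X_1 is not a Gaussian distribution; equivalently, ψ_1 admits a Lévy–Khintchine representation ψ_1(θ) = −i a θ + (1/2) σ² θ² + ∫_{ℝ∖{0}} (1 − e^{iθx} + iθx/(1+x²)) μ(dx) with a ∈ ℝ, σ² ≥ 0 and a nonzero Lévy measure μ satisfying ∫_{ℝ∖{0}} x² μ(dx) < ∞. Then there exist unique β, γ ∈ ℝ such that f(T) = T^β and g(T) = T^γ for all T > 0. -/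
open MeasureTheory ProbabilityTheory Filter Topology

/-!
Taking real parts in the Lévy–Khintchine formula gives `Re ψ₁(θ) = θ² Φ(θ)` with
`Φ(θ) = σ²/2 + ∫ x²/2 · sinc(θx/2)² dμ`, a continuous function with `Φ(0) > 0`. Computing
`ψ_{cd}` in two ways through dilative stability yields `κ · Re ψ₁(sθ) = Re ψ₁(θ)` for
`s = f(c)f(d)/f(cd)` and `κ = g(c)g(d)/g(cd)`. Letting `θ → 0` forces `κ s² = 1`, so `Φ` is
invariant under `θ ↦ sθ`; if `s ≠ 1`, iterating towards `0` makes `Φ` constant, and `Φ(1) = Φ(0)`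
would put all the mass of `μ` at `0` because `|sinc| < 1` off `0`. Hence `s = κ = 1`: `f` and `g`
are continuous positive multiplicative functions on `(0, ∞)`, i.e. powers with unique exponents.
-/

lemma Real.one_sub_cos_eq_sq_mul_sinc_sq (u : ℝ) :
    1 - Real.cos u = u ^ 2 / 2 * Real.sinc (u / 2) ^ 2 := by
  rcases eq_or_ne u 0 with rfl | hu
  · simp
  · rw [Real.sinc_of_ne_zero (div_ne_zero hu two_ne_zero), div_pow, Real.sin_sq_eq_half_sub,
      mul_div_cancel₀ u two_ne_zero]
    field_simp

lemma Complex.norm_exp_I_mul_ofReal_sub_one_sub_le (u : ℝ) :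
    ‖Complex.exp (Complex.I * u) - 1 - Complex.I * u‖ ≤ 2 * u ^ 2 := by
  have hIu : ‖Complex.I * u‖ = |u| := by simp
  rcases le_or_gt |u| 1 with hu | hu
  · calc _ ≤ ‖Complex.I * u‖ ^ 2 := Complex.norm_exp_sub_one_sub_id_le (hIu ▸ hu)
      _ ≤ 2 * u ^ 2 := by rw [hIu, sq_abs]; nlinarith [sq_nonneg u]
  · calc _ ≤ ‖Complex.exp (Complex.I * u) - 1‖ + ‖Complex.I * u‖ := norm_sub_le _ _
      _ ≤ |u| + |u| := by
          rw [hIu]; gcongr; simpa using Real.norm_exp_I_mul_ofReal_sub_one_le (x := u)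
      _ ≤ 2 * u ^ 2 := by rw [← sq_abs]; nlinarith

theorem apply_eq_apply_zero_of_scale_invariant {Y : Type*} [TopologicalSpace Y] [T2Space Y]
    {Φ : ℝ → Y} {s : ℝ} (hs : |s| ≠ 1) (hΦ : ContinuousAt Φ 0)
    (h : ∀ θ, Φ (s * θ) = Φ θ) (θ : ℝ) : Φ θ = Φ 0 := by
  wlog hs1 : |s| < 1 generalizing s
  · have hs0 : s ≠ 0 := by rintro rfl; simp at hs1
    refine this (s := s⁻¹) (by simpa using hs) (fun θ => ?_) (by
      rw [abs_inv]; exact inv_lt_one_of_one_lt₀ (lt_of_le_of_ne (not_lt.mp hs1) (Ne.symm hs)))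
    simpa [hs0] using (h (s⁻¹ * θ)).symm
  have hiter : ∀ n : ℕ, Φ (s ^ n * θ) = Φ θ := by
    intro n
    induction n with
    | zero => simp
    | succ n ih => rw [pow_succ', mul_assoc, h, ih]
  have hlim : Tendsto (fun n : ℕ => s ^ n * θ) atTop (𝓝 0) := by
    simpa using (tendsto_pow_atTop_nhds_zero_of_abs_lt_one hs1).mul_const θ
  exact tendsto_nhds_unique (tendsto_const_nhds.congr fun n => (hiter n).symm)
    (hΦ.tendsto.comp hlim)

theorem integral_pos_of_pos_on_compl_singleton {α : Type*} [MeasurableSpace α] {μ : Measure α}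
    {a : α} (hμa : μ {a} = 0) (hμ : μ ≠ 0) {h : α → ℝ} (hint : Integrable h μ)
    (hpos : ∀ x, x ≠ a → 0 < h x) : 0 < ∫ x, h x ∂μ := by
  have hne : ∀ᵐ x ∂μ, x ≠ a := measure_eq_zero_iff_ae_notMem.mp hμa
  rw [integral_pos_iff_support_of_nonneg_ae (hne.mono fun x hx => (hpos x hx).le) hint]
  refine pos_iff_ne_zero.mpr fun h0 => hμ (ae_eq_bot.mp (eventually_false_iff_eq_bot.mp ?_))
  filter_upwards [hne, measure_eq_zero_iff_ae_notMem.mp h0] with x hx hx'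
  exact hx' (hpos x hx).ne'

theorem existsUnique_rpow_of_map_mul {f : ℝ → ℝ} (hpos : ∀ c, 0 < c → 0 < f c)
    (hcont : ContinuousOn f (Set.Ioi 0))
    (hmul : ∀ c d, 0 < c → 0 < d → f (c * d) = f c * f d) :
    ∃! p : ℝ, ∀ c, 0 < c → f c = c ^ p := by
  set F : ℝ → ℝ := fun x => Real.log (f (Real.exp x))
  have hF : Continuous F := by
    have : Continuous fun x => f (Real.exp x) :=
      hcont.comp_continuous Real.continuous_exp fun x => Real.exp_pos x
    exact this.log fun x => (hpos _ (Real.exp_pos x)).ne'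
  have hFadd : ∀ x y, F (x + y) = F x + F y := fun x y => by
    simp only [F, Real.exp_add, hmul _ _ (Real.exp_pos x) (Real.exp_pos y),
      Real.log_mul (hpos _ (Real.exp_pos x)).ne' (hpos _ (Real.exp_pos y)).ne']
  have hFlin : ∀ x, F x = x * F 1 := fun x => by
    simpa using map_real_smul (AddMonoidHom.mk' F hFadd) hF x 1
  refine ⟨F 1, fun c hc => ?_, fun p hp => ?_⟩
  · rw [Real.rpow_def_of_pos hc, ← hFlin]
    simp only [F, Real.exp_log hc, Real.exp_log (hpos c hc)]
  · have h1 := hp _ (Real.exp_pos 1)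
    simp only [F] at h1 ⊢
    rw [h1, Real.exp_one_rpow, Real.log_exp]

theorem mul_sq_eq_one_and_invariant_of_scaling {Φ : ℝ → ℝ} {s κ : ℝ} (hΦ : ContinuousAt Φ 0)
    (hΦ0 : Φ 0 ≠ 0) (h : ∀ θ, κ * ((s * θ) ^ 2 * Φ (s * θ)) = θ ^ 2 * Φ θ) :
    κ * s ^ 2 = 1 ∧ ∀ θ, Φ (s * θ) = Φ θ := by
  have hscaled : ∀ θ, θ ≠ 0 → κ * s ^ 2 * Φ (s * θ) = Φ θ := fun θ hθ =>
    mul_left_cancel₀ (pow_ne_zero 2 hθ) (by linear_combination h θ)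
  have hΦs : Tendsto (fun θ => Φ (s * θ)) (𝓝 0) (𝓝 (Φ 0)) :=
    hΦ.tendsto.comp (by simpa using (continuous_const_mul s).tendsto 0)
  have hκ : κ * s ^ 2 * Φ 0 = Φ 0 :=
    tendsto_nhds_unique_of_eventuallyEq (l := 𝓝[≠] 0)
      ((hΦs.const_mul (κ * s ^ 2)).mono_left nhdsWithin_le_nhds)
      (hΦ.tendsto.mono_left nhdsWithin_le_nhds) (eventually_nhdsWithin_of_forall hscaled)
  have hκ1 : κ * s ^ 2 = 1 := mul_right_cancel₀ hΦ0 (by rw [hκ, one_mul])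
  refine ⟨hκ1, fun θ => ?_⟩
  rcases eq_or_ne θ 0 with rfl | hθ
  · rw [mul_zero]
  · simpa [hκ1] using hscaled θ hθ

noncomputable def levyKhintchineIntegrand (θ x : ℝ) : ℂ :=
  1 - Complex.exp (Complex.I * (θ : ℂ) * (x : ℂ))
    + Complex.I * (θ : ℂ) * (x : ℂ) / (1 + (x : ℂ) ^ 2)

noncomputable def levyKhintchineExponent (a v : ℝ) (μ : Measure ℝ) (θ : ℝ) : ℂ :=
  -(Complex.I * (a : ℂ) * (θ : ℂ)) + (1 / 2 : ℂ) * (v : ℂ) * (θ : ℂ) ^ 2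
    + ∫ x : ℝ, levyKhintchineIntegrand θ x ∂μ

lemma re_levyKhintchineIntegrand (θ x : ℝ) :
    (levyKhintchineIntegrand θ x).re = 1 - Real.cos (θ * x) := by
  simp [levyKhintchineIntegrand, Complex.exp_re, Complex.div_re, ← Complex.ofReal_pow]

lemma norm_levyKhintchineIntegrand_le (θ x : ℝ) :
    ‖levyKhintchineIntegrand θ x‖ ≤ (2 * θ ^ 2 + |θ|) * x ^ 2 := by
  have hden : (0 : ℝ) < 1 + x ^ 2 := by positivity
  have hsplit : levyKhintchineIntegrand θ x
      = -(Complex.exp (Complex.I * ((θ * x : ℝ) : ℂ)) - 1 - Complex.I * ((θ * x : ℝ) : ℂ))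
        - Complex.I * ((θ * x ^ 3 / (1 + x ^ 2) : ℝ) : ℂ) := by
    have : (1 : ℂ) + (x : ℂ) ^ 2 ≠ 0 := by exact_mod_cast hden.ne'
    simp only [levyKhintchineIntegrand]
    push_cast
    field_simp
    ring
  have htail : |θ * x ^ 3 / (1 + x ^ 2)| ≤ |θ| * x ^ 2 := by
    rw [abs_div, abs_of_pos hden, div_le_iff₀ hden, abs_mul, abs_pow]
    have hx : |x| ≤ 1 + x ^ 2 := by nlinarith [abs_nonneg x, sq_abs x]
    have : |x| ^ 3 ≤ x ^ 2 * (1 + x ^ 2) := by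
      rw [pow_succ, sq_abs]; exact mul_le_mul_of_nonneg_left hx (sq_nonneg x)
    nlinarith [abs_nonneg θ]
  calc ‖levyKhintchineIntegrand θ x‖
      ≤ 2 * (θ * x) ^ 2 + |θ * x ^ 3 / (1 + x ^ 2)| := by
        rw [hsplit]
        refine (norm_sub_le _ _).trans (add_le_add ?_ ?_)
        · rw [norm_neg]; exact Complex.norm_exp_I_mul_ofReal_sub_one_sub_le _
        · rw [norm_mul, Complex.norm_I, one_mul, Complex.norm_real, Real.norm_eq_abs]
    _ ≤ (2 * θ ^ 2 + |θ|) * x ^ 2 := by nlinarith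

section LevyKhintchine

variable {μ : Measure ℝ}

lemma integrable_levyKhintchineIntegrand (hμ : Integrable (fun x => x ^ 2) μ) (θ : ℝ) :
    Integrable (levyKhintchineIntegrand θ) μ :=
  (hμ.const_mul _).mono' (by unfold levyKhintchineIntegrand; fun_prop)
    (ae_of_all _ (norm_levyKhintchineIntegrand_le θ))

lemma re_levyKhintchineExponent (hμ : Integrable (fun x => x ^ 2) μ) (a v θ : ℝ) :
    (levyKhintchineExponent a v μ θ).re
      = θ ^ 2 * (v / 2 + ∫ x, x ^ 2 / 2 * Real.sinc (θ * x / 2) ^ 2 ∂μ) := by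
  have hint : (∫ x, levyKhintchineIntegrand θ x ∂μ).re
      = θ ^ 2 * ∫ x, x ^ 2 / 2 * Real.sinc (θ * x / 2) ^ 2 ∂μ := by
    refine (integral_re (integrable_levyKhintchineIntegrand hμ θ)).symm.trans ?_
    rw [← integral_const_mul]
    refine integral_congr_ae (ae_of_all _ fun x => ?_)
    simp only [RCLike.re_to_complex, re_levyKhintchineIntegrand,
      Real.one_sub_cos_eq_sq_mul_sinc_sq, mul_div_assoc]
    ring
  rw [levyKhintchineExponent, Complex.add_re, hint]
  simp [← Complex.ofReal_pow]
  ring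

lemma norm_sq_mul_sinc_sq_le (θ x : ℝ) : ‖x ^ 2 / 2 * Real.sinc (θ * x / 2) ^ 2‖ ≤ x ^ 2 / 2 := by
  rw [Real.norm_eq_abs, abs_mul, abs_of_nonneg (by positivity), abs_pow]
  exact mul_le_of_le_one_right (by positivity)
    (pow_le_one₀ (abs_nonneg _) (Real.abs_sinc_le_one _))

lemma integrable_sq_mul_sinc_sq (hμ : Integrable (fun x => x ^ 2) μ) (θ : ℝ) :
    Integrable (fun x => x ^ 2 / 2 * Real.sinc (θ * x / 2) ^ 2) μ :=
  (hμ.div_const 2).mono' (by fun_prop) (ae_of_all _ (norm_sq_mul_sinc_sq_le θ))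

lemma continuous_integral_sq_mul_sinc_sq (hμ : Integrable (fun x => x ^ 2) μ) :
    Continuous fun θ => ∫ x, x ^ 2 / 2 * Real.sinc (θ * x / 2) ^ 2 ∂μ :=
  continuous_of_dominated (fun θ => by fun_prop)
    (fun θ => ae_of_all _ (norm_sq_mul_sinc_sq_le θ)) (hμ.div_const 2)
    (ae_of_all _ fun x => by fun_prop)

theorem scale_eq_one_of_re_levyKhintchineExponent {a v : ℝ} (hv : 0 ≤ v)
    (hμ : Integrable (fun x => x ^ 2) μ) (hμ0 : μ {0} = 0) (hμne : μ ≠ 0) {s κ : ℝ} (hs : 0 < s)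
    (h : ∀ θ, κ * (levyKhintchineExponent a v μ (s * θ)).re
      = (levyKhintchineExponent a v μ θ).re) :
    s = 1 ∧ κ = 1 := by
  set J : ℝ → ℝ := fun θ => ∫ x, x ^ 2 / 2 * Real.sinc (θ * x / 2) ^ 2 ∂μ
  have hJ : Continuous J := continuous_integral_sq_mul_sinc_sq hμ
  have hJ0 : 0 < J 0 := by
    refine integral_pos_of_pos_on_compl_singleton hμ0 hμne (integrable_sq_mul_sinc_sq hμ 0)
      fun x hx => ?_
    simp only [zero_mul, zero_div, Real.sinc_zero]
    positivity
  obtain ⟨hκ, hΦ⟩ := mul_sq_eq_one_and_invariant_of_scaling (Φ := fun θ => v / 2 + J θ)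
    (continuous_const.add hJ).continuousAt (by positivity)
    (by simpa only [re_levyKhintchineExponent hμ] using h)
  have hs1 : s = 1 := by
    by_contra hs1
    have hJ1 : J 1 = J 0 := by
      simpa using apply_eq_apply_zero_of_scale_invariant (by rwa [abs_of_pos hs])
        (continuous_const.add hJ).continuousAt hΦ 1
    have hgap : 0 < J 0 - J 1 := by
      rw [← integral_sub (integrable_sq_mul_sinc_sq hμ 0) (integrable_sq_mul_sinc_sq hμ 1)]
      refine integral_pos_of_pos_on_compl_singleton hμ0 hμne
        ((integrable_sq_mul_sinc_sq hμ 0).sub (integrable_sq_mul_sinc_sq hμ 1)) fun x hx => ?_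
      simp only [zero_mul, zero_div, Real.sinc_zero, one_mul]
      rw [← Real.one_sub_cos_eq_sq_mul_sinc_sq]
      linarith [Real.one_sub_sq_div_two_lt_cos hx]
    linarith
  exact ⟨hs1, by simpa [hs1] using hκ⟩

theorem map_mul_of_dilativelyStable_levyKhintchine {Ψ : ℝ → ℝ → ℂ} {f g : ℝ → ℝ}
    (hfpos : ∀ c, 0 < c → 0 < f c) (hgpos : ∀ c, 0 < c → 0 < g c)
    (hDS : ∀ c, 0 < c → ∀ t, 0 < t → ∀ θ, Ψ (c * t) θ = (g c : ℂ) * Ψ t (f c * θ))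
    {a v : ℝ} (hΨ1 : ∀ θ, Ψ 1 θ = levyKhintchineExponent a v μ θ) (hv : 0 ≤ v)
    (hμ : Integrable (fun x => x ^ 2) μ) (hμ0 : μ {0} = 0) (hμne : μ ≠ 0)
    {c d : ℝ} (hc : 0 < c) (hd : 0 < d) :
    f (c * d) = f c * f d ∧ g (c * d) = g c * g d := by
  have hcd : 0 < c * d := mul_pos hc hd
  have hcomp : ∀ θ, (g (c * d) : ℂ) * Ψ 1 (f (c * d) * θ)
      = g c * (g d * Ψ 1 (f d * (f c * θ))) := fun θ => by
    rw [← hDS _ hcd 1 one_pos, ← hDS d hd 1 one_pos, ← hDS c hc _ (mul_pos hd one_pos), mul_assoc]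
  have hscale : ∀ θ, g c * g d / g (c * d)
      * (levyKhintchineExponent a v μ (f c * f d / f (c * d) * θ)).re
      = (levyKhintchineExponent a v μ θ).re := fun θ => by
    have h := congrArg Complex.re (hcomp (θ / f (c * d)))
    simp only [hΨ1, Complex.re_ofReal_mul] at h
    have hf := (hfpos _ hcd).ne'
    have hg := (hgpos _ hcd).ne'
    rw [mul_div_cancel₀ θ hf, show f d * (f c * (θ / f (c * d))) = f c * f d / f (c * d) * θ by
      field_simp] at h
    rw [div_mul_eq_mul_div, div_eq_iff hg]
    linarith
  obtain ⟨hf, hg⟩ := scale_eq_one_of_re_levyKhintchineExponent hv hμ hμ0 hμne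
    (div_pos (mul_pos (hfpos c hc) (hfpos d hd)) (hfpos _ hcd)) hscale
  exact ⟨((div_eq_one_iff_eq (hfpos _ hcd).ne').mp hf).symm,
    ((div_eq_one_iff_eq (hgpos _ hcd).ne').mp hg).symm⟩

end LevyKhintchine

theorem fg_power_of_nonGaussian_finite_variance_general
    (ψ : ∀ k : ℕ, (Fin k → ℝ) → (Fin k → ℝ) → ℂ)
    (f g : ℝ → ℝ)
    (hfpos : ∀ c : ℝ, 0 < c → 0 < f c) (hgpos : ∀ c : ℝ, 0 < c → 0 < g c)
    (hfcont : ContinuousOn f (Set.Ioi 0)) (hgcont : ContinuousOn g (Set.Ioi 0))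
    -- (f,g)-dilative stability
    (hDS : ∀ c : ℝ, 0 < c → ∀ (k : ℕ) (t : Fin k → ℝ), (∀ i, 0 < t i) →
      ∀ θ : Fin k → ℝ,
        ψ k (fun i => c * t i) θ = ((g c : ℝ) : ℂ) * ψ k t (fun i => f c * θ i))
    -- Lévy–Khintchine representation of `ψ₁` with `v = σ² ≥ 0` and a nonzero Lévy
    -- measure `μ` with finite second moment (so `X₁` is not Gaussian)
    (a v : ℝ) (hv : 0 ≤ v)
    (μ : Measure ℝ) (hμ0 : μ {0} = 0) (hμne : μ ≠ 0)
    (hx2 : ∫⁻ x, ENNReal.ofReal (x ^ 2) ∂μ < ⊤)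
    (hLK : ∀ θ : ℝ,
      ψ 1 (fun _ => 1) (fun _ => θ)
        = -(Complex.I * (a : ℂ) * (θ : ℂ)) + (1 / 2 : ℂ) * (v : ℂ) * (θ : ℂ) ^ 2
          + ∫ x : ℝ,
              (1 - Complex.exp (Complex.I * (θ : ℂ) * (x : ℂ))
                + Complex.I * (θ : ℂ) * (x : ℂ) / (1 + (x : ℂ) ^ 2)) ∂μ) :
    ∃! p : ℝ × ℝ, ∀ c : ℝ, 0 < c → f c = c ^ p.1 ∧ g c = c ^ p.2 := by
  have hμ : Integrable (fun x => x ^ 2) μ :=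
    (lintegral_ofReal_ne_top_iff_integrable (by fun_prop) (ae_of_all _ fun x => sq_nonneg x)).mp
      hx2.ne
  have hmul := fun c d (hc : 0 < c) (hd : 0 < d) =>
    map_mul_of_dilativelyStable_levyKhintchine (Ψ := fun t θ => ψ 1 (fun _ => t) (fun _ => θ))
      hfpos hgpos (fun c hc t ht θ => hDS c hc 1 (fun _ => t) (fun _ => ht) (fun _ => θ))
      hLK hv hμ hμ0 hμne hc hd
  obtain ⟨p, hp, hp_unique⟩ :=
    existsUnique_rpow_of_map_mul hfpos hfcont fun c d hc hd => (hmul c d hc hd).1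
  obtain ⟨q, hq, hq_unique⟩ :=
    existsUnique_rpow_of_map_mul hgpos hgcont fun c d hc hd => (hmul c d hc hd).2
  exact ⟨(p, q), fun c hc => ⟨hp c hc, hq c hc⟩, fun r hr =>
    Prod.ext (hp_unique r.1 fun c hc => (hr c hc).1) (hq_unique r.2 fun c hc => (hr c hc).2)⟩

/-- If an infinitely divisible process indexed by `(0,∞)` is
`(f,g)`-dilatively stable, `E(X₁²) < ∞`, `Var(X₁) > 0`, and the law of `X₁` is not
Gaussian — equivalently, `ψ₁` has a Lévy–Khintchine representation with `σ² ≥ 0` and a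
nonzero Lévy measure `μ` with finite second moment — then `f` and `g` are uniquely
determined power functions. -/
theorem fg_power_of_nonGaussian_finite_variance
    {Ω : Type*} [MeasurableSpace Ω] (P : Measure Ω) [IsProbabilityMeasure P]
    (X : ℝ → Ω → ℝ) (hX : ∀ t : ℝ, 0 < t → Measurable (X t))
    (ψ : ∀ k : ℕ, (Fin k → ℝ) → (Fin k → ℝ) → ℂ)
    (hψ0 : ∀ (k : ℕ) (t : Fin k → ℝ), (∀ i, 0 < t i) → ψ k t 0 = 0)
    (hψcont : ∀ (k : ℕ) (t : Fin k → ℝ), (∀ i, 0 < t i) → Continuous (ψ k t))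
    (hψchar : ∀ (k : ℕ) (t : Fin k → ℝ), (∀ i, 0 < t i) → ∀ θ : Fin k → ℝ,
      ∫ ω, Complex.exp (Complex.I * ∑ j, (θ j : ℂ) * (X (t j) ω : ℂ)) ∂P
        = Complex.exp (-ψ k t θ))
    (hID : ∀ (k : ℕ) (t : Fin k → ℝ), (∀ i, 0 < t i) → ∀ n : ℕ, 0 < n →
      ∃ ρ : Measure (Fin k → ℝ), IsProbabilityMeasure ρ ∧
        convPow ρ n = Measure.map (fun ω i => X (t i) ω) P)
    (f g : ℝ → ℝ)
    (hfpos : ∀ c : ℝ, 0 < c → 0 < f c) (hgpos : ∀ c : ℝ, 0 < c → 0 < g c)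
    (hfcont : ContinuousOn f (Set.Ioi 0)) (hgcont : ContinuousOn g (Set.Ioi 0))
    -- (f,g)-dilative stability
    (hDS : ∀ c : ℝ, 0 < c → ∀ (k : ℕ) (t : Fin k → ℝ), (∀ i, 0 < t i) →
      ∀ θ : Fin k → ℝ,
        ψ k (fun i => c * t i) θ = ((g c : ℝ) : ℂ) * ψ k t (fun i => f c * θ i))
    -- moment conditions on `X₁`
    (hL2 : Integrable (fun ω => (X 1 ω) ^ 2) P)
    (hvar : 0 < variance (X 1) P)
    -- Lévy–Khintchine representation of `ψ₁` with `v = σ² ≥ 0` and a nonzero Lévy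
    -- measure `μ` with finite second moment (so `X₁` is not Gaussian)
    (a v : ℝ) (hv : 0 ≤ v)
    (μ : Measure ℝ) (hμ0 : μ {0} = 0) (hμne : μ ≠ 0)
    (hx2 : ∫⁻ x, ENNReal.ofReal (x ^ 2) ∂μ < ⊤)
    (hLK : ∀ θ : ℝ,
      ψ 1 (fun _ => 1) (fun _ => θ)
        = -(Complex.I * (a : ℂ) * (θ : ℂ)) + (1 / 2 : ℂ) * (v : ℂ) * (θ : ℂ) ^ 2
          + ∫ x : ℝ,
              (1 - Complex.exp (Complex.I * (θ : ℂ) * (x : ℂ))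
                + Complex.I * (θ : ℂ) * (x : ℂ) / (1 + (x : ℂ) ^ 2)) ∂μ) :
    ∃! p : ℝ × ℝ, ∀ c : ℝ, 0 < c → f c = c ^ p.1 ∧ g c = c ^ p.2 :=
  fg_power_of_nonGaussian_finite_variance_general ψ f g hfpos hgpos hfcont hgcont hDS a v hv μ hμ0
    hμne hx2 hLK
end

section
/- Let φ : ℝ → ℂ be measurable and f : ℝ² → ℝ be measurable, and let α, δ ∈ ℝ. Assume that f satisfies the dilation equation f(t,u) = T^{α−δ/2} f(t/T, u/T^δ) for all t, u ∈ ℝ and T > 0, and that for all k ∈ ℕ, t_1,…,t_k ∈ ℝ and θ_1,…,θ_k ∈ ℝ the function u ↦ φ(Σ_{j=1}^k θ_j f(t_j, u)) is Lebesgue integrable on ℝ. Define ψ_{t_1,…,t_k}(θ_1,…,θ_k) = ∫_ℝ φ(Σ_{j=1}^k θ_j f(t_j, u)) du. Then ψ_{T t_1,…,T t_k}(θ_1,…,θ_k) = T^δ ψ_{t_1,…,t_k}(T^{α−δ/2} θ_1,…, T^{α−δ/2} θ_k) for all T > 0, k ∈ ℕ, θ_1,…,θ_k ∈ ℝ and t_1,…,t_k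 ∈ ℝ; i.e., the generalized fractional Lévy process with kernel f and Lévy characteristic exponent φ is (α,δ)-dilatively stable. -/
open MeasureTheory

/-! By the dilation equation at `(T t, u)`, `f (T t) u = T^{α-δ/2} f t (u / T^δ)`: the integrand
of `ψ` at the times `T t` is the integrand at the times `t` with frequencies scaled by
`T^{α-δ/2}`, evaluated at `u / T^δ`. The substitution `u ↦ T^δ u` then yields the factor `T^δ`. -/

lemma kernel_apply_mul_of_dilation {f : ℝ → ℝ → ℝ} {α δ : ℝ}
    (hdil : ∀ t u : ℝ, ∀ T : ℝ, 0 < T → f t u = T ^ (α - δ / 2) * f (t / T) (u / T ^ δ))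
    {T : ℝ} (hT : 0 < T) (t u : ℝ) :
    f (T * t) u = T ^ (α - δ / 2) * f t (u / T ^ δ) := by
  rw [hdil (T * t) u T hT, mul_div_cancel_left₀ _ hT.ne']

lemma integral_comp_div_of_pos (g : ℝ → ℂ) {c : ℝ} (hc : 0 < c) :
    ∫ u, g (u / c) = (c : ℂ) * ∫ u, g u := by
  rw [Measure.integral_comp_div, abs_of_pos hc, Complex.real_smul]

theorem generalized_fractional_levy_dilatively_stable_general
    (φ : ℝ → ℂ)
    (f : ℝ → ℝ → ℝ)
    (α δ : ℝ)
    (hdil : ∀ t u : ℝ, ∀ T : ℝ, 0 < T → f t u = T ^ (α - δ / 2) * f (t / T) (u / T ^ δ))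
    (ψ : ∀ k : ℕ, (Fin k → ℝ) → (Fin k → ℝ) → ℂ)
    (hψ : ∀ (k : ℕ) (t θ : Fin k → ℝ), ψ k t θ = ∫ u : ℝ, φ (∑ j, θ j * f (t j) u)) :
    ∀ T : ℝ, 0 < T → ∀ (k : ℕ) (t θ : Fin k → ℝ),
      ψ k (fun i => T * t i) θ
        = ((T ^ δ : ℝ) : ℂ) * ψ k t (fun i => T ^ (α - δ / 2) * θ i) := by
  intro T hT k t θ
  have hscale : ∀ u, ∑ j, θ j * f (T * t j) u
      = ∑ j, T ^ (α - δ / 2) * θ j * f (t j) (u / T ^ δ) := fun u =>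
    Finset.sum_congr rfl fun j _ => by rw [kernel_apply_mul_of_dilation hdil hT]; ring
  simp only [hψ, hscale]
  exact integral_comp_div_of_pos (fun u => φ (∑ j, T ^ (α - δ / 2) * θ j * f (t j) u))
    (Real.rpow_pos_of_pos hT δ)

/-- A generalized fractional Lévy process whose kernel satisfies the
dilation equation `f(t,u) = T^{α−δ/2} f(t/T, u/T^δ)` is `(α,δ)`-dilatively stable. -/
theorem generalized_fractional_levy_dilatively_stable
    (φ : ℝ → ℂ) (hφ : Measurable φ)
    (f : ℝ → ℝ → ℝ) (hf : Measurable (Function.uncurry f))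
    (α δ : ℝ)
    (hdil : ∀ t u : ℝ, ∀ T : ℝ, 0 < T → f t u = T ^ (α - δ / 2) * f (t / T) (u / T ^ δ))
    (hint : ∀ (k : ℕ) (t θ : Fin k → ℝ),
      Integrable (fun u : ℝ => φ (∑ j, θ j * f (t j) u)))
    (ψ : ∀ k : ℕ, (Fin k → ℝ) → (Fin k → ℝ) → ℂ)
    (hψ : ∀ (k : ℕ) (t θ : Fin k → ℝ), ψ k t θ = ∫ u : ℝ, φ (∑ j, θ j * f (t j) u)) :
    ∀ T : ℝ, 0 < T → ∀ (k : ℕ) (t θ : Fin k → ℝ),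
      ψ k (fun i => T * t i) θ
        = ((T ^ δ : ℝ) : ℂ) * ψ k t (fun i => T ^ (α - δ / 2) * θ i) :=
  generalized_fractional_levy_dilatively_stable_general φ f α δ hdil ψ hψ
end

section
/- Let β ∈ (−1,1) and C > 0, and define f : ℝ² → ℝ by f(x,t) = (1 − e^{−xt})/x if x > 0 and t > 0, and f(x,t) = 0 otherwise. For k ∈ ℕ, t_1,…,t_k ∈ [0,∞) and θ_1,…,θ_k ∈ ℝ define ψ_{t_1,…,t_k}(θ_1,…,θ_k) = −C ∫_0^∞ ( exp{ −(1/2) ∫_ℝ ( Σ_{j=1}^k θ_j (f(x, t_j − s) − f(x, −s)) )² ds } − 1 ) x^β dx, assuming all these integrals are absolutely convergent. Then for all T > 0, k ∈ ℕ, θ_1,…,θ_k ∈ ℝ and t_1,…,t_k ∈ [0,∞), ψ_{T t_1,…,T t_k}(θ_1,…,θ_k) = T^{−β−1} ψ_{t_1,…,t_k}(T^{3/2} θ_1,…, T^{3/2} θ_k); i.e., the limit process Z_β of joint temporal and contemporaneous aggregation of random-coefficient AR(1) processes is (1 − β/2, −β−1)-dilatively stable. -/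
/-!
The kernel satisfies `f x (T u) = T f (T x) u`. Substituting `s = T s'` in the inner integral
turns the time scaling `t ↦ T t` into the frequency scaling `x ↦ T x` at the cost of a factor
`T² · T = (T^{3/2})²`, which is absorbed into `θ`; substituting `y = T x` in the outer integral
against `x^β dx` then produces the factor `T^{-β-1}`.
-/

open MeasureTheory

lemma kernel_comp_mul {f : ℝ → ℝ → ℝ}
    (hf : ∀ x t : ℝ, f x t = if 0 < x ∧ 0 < t then (1 - Real.exp (-(x * t))) / x else 0)
    {T : ℝ} (hT : 0 < T) (x u : ℝ) :
    f x (T * u) = T * f (T * x) u := by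
  simp only [hf, mul_pos_iff_of_pos_left hT]
  split_ifs with h
  · rw [mul_div_assoc', mul_div_mul_left _ _ hT.ne', mul_left_comm, mul_assoc]
  · rw [mul_zero]

lemma integral_sq_mul_comp_inv_mul (h : ℝ → ℝ) {T : ℝ} (hT : 0 < T) :
    ∫ s, (T * h (T⁻¹ * s)) ^ 2 = ∫ s, (T ^ ((3 : ℝ) / 2) * h s) ^ 2 := by
  have hT3 : (T ^ ((3 : ℝ) / 2)) ^ 2 = T ^ 2 * T := by
    rw [← Real.rpow_natCast, ← Real.rpow_mul hT.le]
    norm_num [Real.rpow_natCast, pow_succ]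
  simp_rw [mul_pow, hT3, integral_const_mul, Measure.integral_comp_inv_mul_left (fun s => h s ^ 2),
    abs_of_pos hT, smul_eq_mul, mul_assoc]

lemma setIntegral_Ioi_comp_mul_mul_rpow (G : ℝ → ℝ) (β : ℝ) {T : ℝ} (hT : 0 < T) :
    ∫ x in Set.Ioi (0 : ℝ), G (T * x) * x ^ β
      = T ^ (-β - 1) * ∫ x in Set.Ioi (0 : ℝ), G x * x ^ β := by
  have hx : ∀ x ∈ Set.Ioi (0 : ℝ), G (T * x) * x ^ β = T ^ (-β) * (G (T * x) * (T * x) ^ β) := by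
    intro x hx
    rw [Real.mul_rpow hT.le (le_of_lt hx), Real.rpow_neg hT.le]
    field_simp
  rw [setIntegral_congr_fun measurableSet_Ioi hx, integral_const_mul,
    integral_comp_mul_left_Ioi (fun y => G y * y ^ β) 0 hT, mul_zero, smul_eq_mul, ← mul_assoc,
    Real.rpow_sub hT, Real.rpow_one, div_eq_mul_inv]

lemma integral_sq_increments_comp_mul {g : ℝ → ℝ → ℝ} {T : ℝ} (hT : 0 < T)
    (hg : ∀ x u, g x (T * u) = T * g (T * x) u) (x : ℝ) {k : ℕ} (t θ : Fin k → ℝ) :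
    ∫ s, (∑ j, θ j * (g x (T * t j - s) - g x (-s))) ^ 2
      = ∫ s, (∑ j, T ^ ((3 : ℝ) / 2) * θ j * (g (T * x) (t j - s) - g (T * x) (-s))) ^ 2 := by
  set H : ℝ → ℝ := fun s => ∑ j, θ j * (g (T * x) (t j - s) - g (T * x) (-s))
  have hsum : ∀ s, ∑ j, θ j * (g x (T * t j - s) - g x (-s)) = T * H (T⁻¹ * s) := by
    intro s
    rw [Finset.mul_sum]
    refine Finset.sum_congr rfl fun j _ => ?_
    rw [show T * t j - s = T * (t j - T⁻¹ * s) by field_simp,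
      show -s = T * -(T⁻¹ * s) by field_simp, hg, hg]
    ring
  simp_rw [hsum, integral_sq_mul_comp_inv_mul H hT, H, Finset.mul_sum, mul_assoc]

theorem aggregation_limit_process_dilatively_stable_general
    (β : ℝ) (C : ℝ)
    (f : ℝ → ℝ → ℝ)
    (hf : ∀ x t : ℝ, f x t = if 0 < x ∧ 0 < t then (1 - Real.exp (-(x * t))) / x else 0)
    (ψ : ∀ k : ℕ, (Fin k → ℝ) → (Fin k → ℝ) → ℝ)
    (hψ : ∀ (k : ℕ) (t : Fin k → ℝ), (∀ i, 0 ≤ t i) → ∀ θ : Fin k → ℝ,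
      ψ k t θ = -C * ∫ x in Set.Ioi (0 : ℝ),
        (Real.exp (-(1 / 2) * ∫ s : ℝ, (∑ j, θ j * (f x (t j - s) - f x (-s))) ^ 2) - 1)
          * x ^ β) :
    ∀ T : ℝ, 0 < T → ∀ (k : ℕ) (t : Fin k → ℝ), (∀ i, 0 ≤ t i) → ∀ θ : Fin k → ℝ,
      ψ k (fun i => T * t i) θ
        = T ^ (-β - 1) * ψ k t (fun i => T ^ ((3 : ℝ) / 2) * θ i) := by
  intro T hT k t ht θ
  rw [hψ k _ (fun i => mul_nonneg hT.le (ht i)), hψ k t ht]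
  simp_rw [integral_sq_increments_comp_mul hT (kernel_comp_mul hf hT)]
  rw [setIntegral_Ioi_comp_mul_mul_rpow (fun y => Real.exp (-(1 / 2) * ∫ s : ℝ,
      (∑ j, T ^ ((3 : ℝ) / 2) * θ j * (f y (t j - s) - f y (-s))) ^ 2) - 1) β hT]
  ring

/-- The limit process `Z_β` of joint temporal and contemporaneous
aggregation of random-coefficient AR(1) processes is `(1 − β/2, −β−1)`-dilatively stable:
its characteristic exponents satisfy
`ψ_{Tt₁,…,Ttₖ}(θ) = T^{−β−1} ψ_{t₁,…,tₖ}(T^{3/2} θ)`. -/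
theorem aggregation_limit_process_dilatively_stable
    (β : ℝ) (hβ : β ∈ Set.Ioo (-1 : ℝ) 1) (C : ℝ) (hC : 0 < C)
    (f : ℝ → ℝ → ℝ)
    (hf : ∀ x t : ℝ, f x t = if 0 < x ∧ 0 < t then (1 - Real.exp (-(x * t))) / x else 0)
    (ψ : ∀ k : ℕ, (Fin k → ℝ) → (Fin k → ℝ) → ℝ)
    -- absolute convergence of the inner integrals
    (hint1 : ∀ (x : ℝ) (k : ℕ) (t θ : Fin k → ℝ),
      Integrable (fun s : ℝ => (∑ j, θ j * (f x (t j - s) - f x (-s))) ^ 2))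
    -- absolute convergence of the outer integrals
    (hint2 : ∀ (k : ℕ) (t θ : Fin k → ℝ),
      IntegrableOn
        (fun x : ℝ =>
          (Real.exp (-(1 / 2) * ∫ s : ℝ, (∑ j, θ j * (f x (t j - s) - f x (-s))) ^ 2) - 1)
            * x ^ β)
        (Set.Ioi 0))
    (hψ : ∀ (k : ℕ) (t : Fin k → ℝ), (∀ i, 0 ≤ t i) → ∀ θ : Fin k → ℝ,
      ψ k t θ = -C * ∫ x in Set.Ioi (0 : ℝ),
        (Real.exp (-(1 / 2) * ∫ s : ℝ, (∑ j, θ j * (f x (t j - s) - f x (-s))) ^ 2) - 1)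
          * x ^ β) :
    ∀ T : ℝ, 0 < T → ∀ (k : ℕ) (t : Fin k → ℝ), (∀ i, 0 ≤ t i) → ∀ θ : Fin k → ℝ,
      ψ k (fun i => T * t i) θ
        = T ^ (-β - 1) * ψ k t (fun i => T ^ ((3 : ℝ) / 2) * θ i) :=
  aggregation_limit_process_dilatively_stable_general β C f hf ψ hψ
end

section
/- Let α ∈ (0,2], H ∈ (0,1) with H ≠ 1/α, and σ > 0. Define f : ℝ² → ℝ by f(t,u) = |t−u|^{H−1/α} − |u|^{H−1/α} if t ≠ u and u ≠ 0, and f(t,u) = 0 if t = u or u = 0. Assume that for all k ∈ ℕ, t_1,…,t_k ∈ ℝ and θ_1,…,θ_k ∈ ℝ, the function u ↦ |σ Σ_{j=1}^k θ_j f(t_j,u)|^α is Lebesgue integrable on ℝ, and define ψ_{t_1,…,t_k}(θ_1,…,θ_k) = ∫_ℝ |σ Σ_{j=1}^k θ_j f(t_j, u)|^α du. Then for all T > 0, k ∈ ℕ, θ_1,…,θ_k ∈ ℝ and t_1,…,t_k ∈ ℝ, ψ_{T t_1,…,T t_k}(θ_1,…,θ_k) = T · ψ_{t_1,…,t_k}(T^{H−1/α}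 θ_1,…, T^{H−1/α} θ_k). -/
open MeasureTheory

/-!
The kernel `(t, u) ↦ |t - u|^γ - |u|^γ` is jointly homogeneous of degree `γ = H - 1/α` under
dilations `(t, u) ↦ (T t, T u)`. Substituting `u ↦ T u` in the integral defining
`ψ_{T t}(θ)` therefore costs the Jacobian `T` and moves the factor `T^γ` from the kernel onto `θ`.
-/

/-- Set to `0` on the null set `t = u ∨ u = 0`, where `|·| ^ γ` may be singular. -/
noncomputable def wellBalancedKernel (γ t u : ℝ) : ℝ :=
  if t ≠ u ∧ u ≠ 0 then |t - u| ^ γ - |u| ^ γ else 0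

theorem wellBalancedKernel_mul_mul (γ : ℝ) {T : ℝ} (hT : 0 < T) (t u : ℝ) :
    wellBalancedKernel γ (T * t) (T * u) = T ^ γ * wellBalancedKernel γ t u := by
  have hcond : (T * t ≠ T * u ∧ T * u ≠ 0) ↔ (t ≠ u ∧ u ≠ 0) := by
    simp [hT.ne']
  unfold wellBalancedKernel
  simp only [hcond]
  split_ifs
  · rw [← mul_sub, abs_mul, abs_mul, abs_of_pos hT, Real.mul_rpow hT.le (abs_nonneg _),
      Real.mul_rpow hT.le (abs_nonneg _)]
    ring
  · rw [mul_zero]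

theorem integral_sum_comp_dilation {ι : Type*} [Fintype ι] (F : ℝ → ℝ) (f : ℝ → ℝ → ℝ)
    {T c : ℝ} (hT : 0 < T) (hf : ∀ t u, f (T * t) (T * u) = c * f t u) (t θ : ι → ℝ) :
    ∫ u, F (∑ j, θ j * f (T * t j) u) = T * ∫ u, F (∑ j, (c * θ j) * f (t j) u) := by
  have hsub := Measure.integral_comp_mul_left (fun u => F (∑ j, θ j * f (T * t j) u)) T
  simp only [hf, abs_of_pos (inv_pos.mpr hT), smul_eq_mul] at hsub
  rw [eq_inv_mul_iff_mul_eq₀ hT.ne'] at hsub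
  rw [← hsub]
  simp only [mul_assoc, mul_left_comm (θ _)]

theorem well_balanced_linear_fractional_stable_scaling_general
    (α H σ : ℝ)
    (f : ℝ → ℝ → ℝ)
    (hf : ∀ t u : ℝ, f t u =
      if t ≠ u ∧ u ≠ 0 then |t - u| ^ (H - 1 / α) - |u| ^ (H - 1 / α) else 0)
    (ψ : ∀ k : ℕ, (Fin k → ℝ) → (Fin k → ℝ) → ℝ)
    (hψ : ∀ (k : ℕ) (t θ : Fin k → ℝ),
      ψ k t θ = ∫ u : ℝ, |σ * ∑ j, θ j * f (t j) u| ^ α) :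
    ∀ T : ℝ, 0 < T → ∀ (k : ℕ) (t θ : Fin k → ℝ),
      ψ k (fun i => T * t i) θ = T * ψ k t (fun i => T ^ (H - 1 / α) * θ i) := by
  intro T hT k t θ
  have hf_kernel : f = wellBalancedKernel (H - 1 / α) := funext₂ hf
  subst hf_kernel
  rw [hψ, hψ]
  exact integral_sum_comp_dilation (fun x => |σ * x| ^ α) _ hT
    (wellBalancedKernel_mul_mul _ hT) t θ

/-- The characteristic exponents of the well-balanced linear fractional
stable process satisfy `ψ_{Tt₁,…,Ttₖ}(θ) = T · ψ_{t₁,…,tₖ}(T^{H−1/α} θ)`, i.e. the process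
is `(H − 1/α + 1/2, 1)`-dilatively stable. -/
theorem well_balanced_linear_fractional_stable_scaling
    (α H σ : ℝ) (hα : α ∈ Set.Ioc (0 : ℝ) 2) (hH : H ∈ Set.Ioo (0 : ℝ) 1)
    (hHα : H ≠ 1 / α) (hσ : 0 < σ)
    (f : ℝ → ℝ → ℝ)
    (hf : ∀ t u : ℝ, f t u =
      if t ≠ u ∧ u ≠ 0 then |t - u| ^ (H - 1 / α) - |u| ^ (H - 1 / α) else 0)
    (hint : ∀ (k : ℕ) (t θ : Fin k → ℝ),
      Integrable (fun u : ℝ => |σ * ∑ j, θ j * f (t j) u| ^ α))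
    (ψ : ∀ k : ℕ, (Fin k → ℝ) → (Fin k → ℝ) → ℝ)
    (hψ : ∀ (k : ℕ) (t θ : Fin k → ℝ),
      ψ k t θ = ∫ u : ℝ, |σ * ∑ j, θ j * f (t j) u| ^ α) :
    ∀ T : ℝ, 0 < T → ∀ (k : ℕ) (t θ : Fin k → ℝ),
      ψ k (fun i => T * t i) θ = T * ψ k t (fun i => T ^ (H - 1 / α) * θ i) :=
  well_balanced_linear_fractional_stable_scaling_general α H σ f hf ψ hψ
end

section
/- Let 𝕋 be ℝ, [0,∞) or (0,∞), and let (X_t)_{t∈𝕋} be a real-valued stochastic process whose finite-dimensional distributions are infinitely divisible, with characteristic exponents ψ_{t_1,…,t_k}, and suppose X is (α,δ)-dilatively stable for some α, δ ∈ ℝ. If E(X_t²) < ∞ for all t ∈ 𝕋, then for all T > 0 and t ∈ 𝕋, E(X_{Tt}) = T^{α+δ/2} E(X_t) and Var(X_{Tt}) = T^{2α} Var(X_t). -/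
/-! Fix `t` and write `g_t(θ) = ψ_t(θ)` for the one-dimensional characteristic exponent.
Since `g_t` is continuous, vanishes at `0` and `exp (-g_t)` is the characteristic function `φ_t`,
near `0` it is the principal branch `-log φ_t`. A finite second moment makes `φ_t` of class `C²`
with `φ_t'(0) = i E X_t` and `φ_t''(0) = -E X_t²`, so `g_t'(0) = -i E X_t` and
`g_t''(0) = Var X_t`. Dilative stability says `g_{ct}(θ) = c^δ g_t(c^{α-δ/2} θ)`; differentiating
once and twice at `0` gives the scaling of the mean and of the variance. -/

open MeasureTheory ProbabilityTheory Filter Topology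

open Complex

lemma Filter.EventuallyEq.neg_log_of_exp_neg_eq {α : Type*} [TopologicalSpace α] {x : α}
    {g φ : α → ℂ} (hg : ContinuousAt g x) (hgx : g x = 0) (h : ∀ y, exp (-g y) = φ y) :
    g =ᶠ[𝓝 x] fun y => -log (φ y) := by
  have hstrip : ∀ᶠ y in 𝓝 x, |(g y).im| < Real.pi := by
    refine (continuous_im.abs.continuousAt.comp hg).eventually (gt_mem_nhds ?_)
    simp [hgx, Real.pi_pos]
  filter_upwards [hstrip] with y hy
  rw [← h, log_exp] <;> simp only [neg_neg, neg_im] <;> linarith [abs_lt.mp hy]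

section LogComp

variable {φ : ℝ → ℂ} {x : ℝ}

lemma deriv_log_comp (hφ : DifferentiableAt ℝ φ x) (hx : φ x ∈ slitPlane) :
    deriv (fun y => log (φ y)) x = deriv φ x / φ x :=
  (hφ.hasDerivAt.clog_real hx).deriv

lemma iteratedDeriv_two_log_comp (hφ : ContDiff ℝ 2 φ) (hx : φ x ∈ slitPlane) :
    iteratedDeriv 2 (fun y => log (φ y)) x
      = (iteratedDeriv 2 φ x * φ x - deriv φ x ^ 2) / φ x ^ 2 := by
  have hφd : Differentiable ℝ φ := hφ.differentiable (by norm_num)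
  have hφ'd : Differentiable ℝ (deriv φ) := by
    simpa using hφ.differentiable_iteratedDeriv 1 (by norm_num)
  have hderiv : deriv (fun y => log (φ y)) =ᶠ[𝓝 x] deriv φ / φ := by
    filter_upwards [hφd.continuous.continuousAt.preimage_mem_nhds (isOpen_slitPlane.mem_nhds hx)]
      with y hy using deriv_log_comp (hφd y) hy
  rw [iteratedDeriv_succ, iteratedDeriv_one, hderiv.deriv_eq,
    deriv_div (hφ'd x) (hφd x) (slitPlane_ne_zero hx), iteratedDeriv_succ, iteratedDeriv_one]
  ring

end LogComp

lemma deriv_const_mul_comp_mul (a : ℂ) (b : ℝ) (f : ℝ → ℂ) :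
    deriv (fun x => a * f (b * x)) = fun x => a * b * deriv f (b * x) := by
  funext x
  simp only [deriv_const_mul_field', deriv_comp_mul_left, Complex.real_smul, mul_assoc]

lemma iteratedDeriv_two_const_mul_comp_mul (a : ℂ) (b : ℝ) (f : ℝ → ℂ) (x : ℝ) :
    iteratedDeriv 2 (fun x => a * f (b * x)) x = a * b ^ 2 * iteratedDeriv 2 f (b * x) := by
  rw [iteratedDeriv_succ, iteratedDeriv_one, iteratedDeriv_succ, iteratedDeriv_one,
    deriv_const_mul_comp_mul, deriv_const_mul_comp_mul]
  ring

section CharExponent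

variable {μ : Measure ℝ} [IsProbabilityMeasure μ] {g : ℝ → ℂ}

lemma deriv_zero_eq_neg_mean_of_exp_neg_eq_charFun (hμ : MemLp id 1 μ) (hg : ContinuousAt g 0)
    (hg0 : g 0 = 0) (hchar : ∀ θ, exp (-g θ) = charFun μ θ) :
    deriv g 0 = -(I * ∫ x, x ∂μ) := by
  have hφ : DifferentiableAt ℝ (charFun μ) 0 :=
    (contDiff_charFun (n := 1) (by simpa using hμ)).differentiable one_ne_zero 0
  rw [(Filter.EventuallyEq.neg_log_of_exp_neg_eq hg hg0 hchar).deriv_eq, deriv.fun_neg,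
    deriv_log_comp hφ (by simp), ← iteratedDeriv_one,
    iteratedDeriv_charFun_zero (by simpa using hμ)]
  simp

lemma iteratedDeriv_two_zero_eq_variance_of_exp_neg_eq_charFun (hμ : MemLp id 2 μ)
    (hg : ContinuousAt g 0) (hg0 : g 0 = 0) (hchar : ∀ θ, exp (-g θ) = charFun μ θ) :
    iteratedDeriv 2 g 0 = Var[id; μ] := by
  rw [(Filter.EventuallyEq.neg_log_of_exp_neg_eq hg hg0 hchar).iteratedDeriv_eq,
    iteratedDeriv_fun_neg, iteratedDeriv_two_log_comp (contDiff_charFun hμ) (by simp),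
    ← iteratedDeriv_one, iteratedDeriv_charFun_zero hμ,
    iteratedDeriv_charFun_zero (hμ.mono_exponent (by norm_num)), variance_eq_sub hμ]
  simp only [I_sq, neg_mul, one_mul, charFun_zero, probReal_univ, ofReal_one, mul_one, pow_one,
    mul_pow, sub_neg_eq_add, one_pow, div_one, neg_add_rev, neg_neg, Pi.pow_apply, id_eq,
    ofReal_sub, ofReal_pow]
  ring

end CharExponent

lemma deriv_eq_neg_mean_and_iteratedDeriv_two_eq_variance {Ω : Type*} [MeasurableSpace Ω] {P : Measure Ω}
    [IsProbabilityMeasure P] {Y : Ω → ℝ} (hY : Measurable Y)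
    (hY2 : Integrable (fun ω => Y ω ^ 2) P) {g : ℝ → ℂ} (hg : ContinuousAt g 0) (hg0 : g 0 = 0)
    (hchar : ∀ θ : ℝ, ∫ ω, exp (I * (θ * Y ω)) ∂P = exp (-g θ)) :
    deriv g 0 = -(I * ∫ ω, Y ω ∂P) ∧ iteratedDeriv 2 g 0 = Var[Y; P] := by
  have : IsProbabilityMeasure (P.map Y) := Measure.isProbabilityMeasure_map hY.aemeasurable
  have hμ : MemLp id 2 (P.map Y) :=
    (memLp_map_measure_iff aestronglyMeasurable_id hY.aemeasurable).mpr
      ((memLp_two_iff_integrable_sq hY.aestronglyMeasurable).mpr hY2)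
  have hchar' : ∀ θ, exp (-g θ) = charFun (P.map Y) θ := fun θ => by
    rw [← hchar, charFun_apply_real, integral_map hY.aemeasurable (by fun_prop)]
    simp only [mul_comm I, mul_assoc]
  have hmean : ∫ x, x ∂(P.map Y) = ∫ ω, Y ω ∂P :=
    integral_map hY.aemeasurable aestronglyMeasurable_id
  have hvar : Var[id; P.map Y] = Var[Y; P] := variance_map aemeasurable_id hY.aemeasurable
  rw [← hmean, ← hvar]
  exact ⟨deriv_zero_eq_neg_mean_of_exp_neg_eq_charFun (hμ.mono_exponent (by norm_num)) hg hg0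
      hchar', iteratedDeriv_two_zero_eq_variance_of_exp_neg_eq_charFun hμ hg hg0 hchar'⟩

theorem dilatively_stable_moment_scaling_general
    {Ω : Type*} [MeasurableSpace Ω] (P : Measure Ω) [IsProbabilityMeasure P]
    (T : Set ℝ) (hT : T = Set.univ ∨ T = Set.Ici 0 ∨ T = Set.Ioi 0)
    (X : ℝ → Ω → ℝ) (hX : ∀ t ∈ T, Measurable (X t))
    (ψ : ∀ k : ℕ, (Fin k → ℝ) → (Fin k → ℝ) → ℂ)
    (hψ0 : ∀ (k : ℕ) (t : Fin k → ℝ), (∀ i, t i ∈ T) → ψ k t 0 = 0)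
    (hψcont : ∀ (k : ℕ) (t : Fin k → ℝ), (∀ i, t i ∈ T) → Continuous (ψ k t))
    (hψchar : ∀ (k : ℕ) (t : Fin k → ℝ), (∀ i, t i ∈ T) → ∀ θ : Fin k → ℝ,
      ∫ ω, Complex.exp (Complex.I * ∑ j, (θ j : ℂ) * (X (t j) ω : ℂ)) ∂P
        = Complex.exp (-ψ k t θ))
    (α δ : ℝ)
    -- (α,δ)-dilative stability
    (hDS : ∀ c : ℝ, 0 < c → ∀ (k : ℕ) (t : Fin k → ℝ), (∀ i, t i ∈ T) →
      ∀ θ : Fin k → ℝ,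
        ψ k (fun i => c * t i) θ
          = ((c ^ δ : ℝ) : ℂ) * ψ k t (fun i => c ^ (α - δ / 2) * θ i))
    -- finite second moments
    (hL2 : ∀ t ∈ T, Integrable (fun ω => (X t ω) ^ 2) P) :
    ∀ c : ℝ, 0 < c → ∀ t ∈ T,
      (∫ ω, X (c * t) ω ∂P) = c ^ (α + δ / 2) * ∫ ω, X t ω ∂P
        ∧ variance (X (c * t)) P = c ^ (2 * α) * variance (X t) P := by
  intro c hc t ht
  have hct : c * t ∈ T := by
    rcases hT with rfl | rfl | rfl
    exacts [trivial, mul_nonneg hc.le ht, mul_pos hc ht]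
  set g : ℝ → ℝ → ℂ := fun s θ => ψ 1 (fun _ => s) (fun _ => θ)
  have hmoments : ∀ s ∈ T,
      deriv (g s) 0 = -(I * ∫ ω, X s ω ∂P) ∧ iteratedDeriv 2 (g s) 0 = Var[X s; P] := by
    intro s hs
    refine deriv_eq_neg_mean_and_iteratedDeriv_two_eq_variance (hX s hs) (hL2 s hs)
      ((hψcont 1 _ fun _ => hs).comp (continuous_pi fun _ => continuous_id)).continuousAt
      (hψ0 1 _ fun _ => hs) fun θ => ?_
    simpa only [Fin.sum_univ_one] using hψchar 1 _ (fun _ => hs) fun _ => θ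
  set b : ℝ := c ^ (α - δ / 2)
  have hscale : g (c * t) = fun θ => ((c ^ δ : ℝ) : ℂ) * g t (b * θ) :=
    funext fun θ => hDS c hc 1 _ (fun _ => ht) fun _ => θ
  have hmean_exp : c ^ δ * b = c ^ (α + δ / 2) := by
    rw [← Real.rpow_add hc]; ring_nf
  have hvar_exp : c ^ δ * b ^ 2 = c ^ (2 * α) := by
    rw [← Real.rpow_natCast, ← Real.rpow_mul hc.le, ← Real.rpow_add hc]; ring_nf
  obtain ⟨hmean_t, hvar_t⟩ := hmoments t ht
  obtain ⟨hmean_ct, hvar_ct⟩ := hmoments (c * t) hct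
  constructor
  · have h := congrFun (deriv_const_mul_comp_mul ((c ^ δ : ℝ) : ℂ) b (g t)) 0
    rw [← hscale, hmean_ct, mul_zero, hmean_t] at h
    rw [← hmean_exp]
    apply ofReal_injective
    apply mul_left_cancel₀ (neg_ne_zero.mpr I_ne_zero)
    push_cast
    linear_combination h
  · have h := iteratedDeriv_two_const_mul_comp_mul ((c ^ δ : ℝ) : ℂ) b (g t) 0
    rw [← hscale, hvar_ct, mul_zero, hvar_t] at h
    rw [← hvar_exp]
    exact_mod_cast h

/-- For an `(α,δ)`-dilatively stable infinitely divisible process with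
finite second moments, `E(X_{Tt}) = T^{α+δ/2} E(X_t)` and `Var(X_{Tt}) = T^{2α} Var(X_t)`. -/
theorem dilatively_stable_moment_scaling
    {Ω : Type*} [MeasurableSpace Ω] (P : Measure Ω) [IsProbabilityMeasure P]
    (T : Set ℝ) (hT : T = Set.univ ∨ T = Set.Ici 0 ∨ T = Set.Ioi 0)
    (X : ℝ → Ω → ℝ) (hX : ∀ t ∈ T, Measurable (X t))
    (ψ : ∀ k : ℕ, (Fin k → ℝ) → (Fin k → ℝ) → ℂ)
    (hψ0 : ∀ (k : ℕ) (t : Fin k → ℝ), (∀ i, t i ∈ T) → ψ k t 0 = 0)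
    (hψcont : ∀ (k : ℕ) (t : Fin k → ℝ), (∀ i, t i ∈ T) → Continuous (ψ k t))
    (hψchar : ∀ (k : ℕ) (t : Fin k → ℝ), (∀ i, t i ∈ T) → ∀ θ : Fin k → ℝ,
      ∫ ω, Complex.exp (Complex.I * ∑ j, (θ j : ℂ) * (X (t j) ω : ℂ)) ∂P
        = Complex.exp (-ψ k t θ))
    (hID : ∀ (k : ℕ) (t : Fin k → ℝ), (∀ i, t i ∈ T) → ∀ n : ℕ, 0 < n →
      ∃ ρ : Measure (Fin k → ℝ), IsProbabilityMeasure ρ ∧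
        convPow ρ n = Measure.map (fun ω i => X (t i) ω) P)
    (α δ : ℝ)
    -- (α,δ)-dilative stability
    (hDS : ∀ c : ℝ, 0 < c → ∀ (k : ℕ) (t : Fin k → ℝ), (∀ i, t i ∈ T) →
      ∀ θ : Fin k → ℝ,
        ψ k (fun i => c * t i) θ
          = ((c ^ δ : ℝ) : ℂ) * ψ k t (fun i => c ^ (α - δ / 2) * θ i))
    -- finite second moments
    (hL2 : ∀ t ∈ T, Integrable (fun ω => (X t ω) ^ 2) P) :
    ∀ c : ℝ, 0 < c → ∀ t ∈ T,
      (∫ ω, X (c * t) ω ∂P) = c ^ (α + δ / 2) * ∫ ω, X t ω ∂P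
        ∧ variance (X (c * t)) P = c ^ (2 * α) * variance (X t) P :=
  dilatively_stable_moment_scaling_general P T hT X hX ψ hψ0 hψcont hψchar α δ hDS hL2
end
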